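/- arXiv:1411.6024 — 7 statements merged into one kernel-verified Lean document; each statement's English description precedes it below -/
import Mathlib

section
/- Let |a⟩ and |b⟩ be vectors in a finite-dimensional Hilbert space and let ρ = |a⟩⟨b| + |b⟩⟨a| with tr ρ = 0. Then the trace norm of ρ satisfies ‖ρ‖₁ ≤ 2√(⟨a|a⟩⟨b|b⟩). -/
open Matrix
open scoped ComplexOrder

/-! ρ has rank at most 2, so by Cauchy–Schwarz over its (at most two) nonzero singular values
`‖ρ‖₁² ≤ 2 tr(ρᴴρ)`. Since ρ is Hermitian, expanding gives
`tr(ρᴴρ) = tr(ρ²) = (tr ρ)² - 2 |⟨b|a⟩|² + 2 ⟨a|a⟩⟨b|b⟩`, which is at most `2 ⟨a|a⟩⟨b|b⟩` when `tr ρ = 0`. -/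

/-- The trace norm of a square complex matrix: the sum of its singular values.
For a Hermitian matrix this equals the sum of the absolute values of its eigenvalues. -/
noncomputable def traceNorm {n : Type*} [Fintype n] [DecidableEq n]
    (A : Matrix n n ℂ) : ℝ :=
  ∑ i, Real.sqrt ((Matrix.posSemidef_conjTranspose_mul_self A).isHermitian.eigenvalues i)

open Finset

theorem Matrix.rank_add_le {m n K : Type*} [Fintype n] [Field K]
    (A B : Matrix m n K) : (A + B).rank ≤ A.rank + B.rank := by
  unfold Matrix.rank
  calc Module.finrank K (LinearMap.range (A + B).mulVecLin)
      ≤ Module.finrank K ↥(LinearMap.range A.mulVecLin ⊔ LinearMap.range B.mulVecLin) := by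
        refine Submodule.finrank_mono ?_
        rintro _ ⟨x, rfl⟩
        rw [Matrix.mulVecLin_add, LinearMap.add_apply]
        exact Submodule.add_mem_sup ⟨x, rfl⟩ ⟨x, rfl⟩
    _ ≤ _ := Submodule.finrank_add_le_finrank_add_finrank _ _

theorem Matrix.rank_vecMulVec_add_vecMulVec_le {m n K : Type*} [Fintype n] [Field K]
    (a b : m → K) (c d : n → K) : (vecMulVec a c + vecMulVec b d).rank ≤ 2 :=
  (rank_add_le _ _).trans (add_le_add (rank_vecMulVec_le _ _) (rank_vecMulVec_le _ _))

theorem sq_sum_sqrt_le_card_mul_sum {ι : Type*} [Fintype ι] (f : ι → ℝ) (hf : 0 ≤ f) :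
    (∑ i, √(f i)) ^ 2 ≤ #{i | f i ≠ 0} * ∑ i, f i := by
  set T := ({i | f i ≠ 0} : Finset ι)
  calc (∑ i, √(f i)) ^ 2 = (∑ i ∈ T, √(f i)) ^ 2 := by
        rw [sum_filter_of_ne fun i _ h => ?_]
        contrapose! h
        simp [h]
    _ ≤ #T * ∑ i ∈ T, √(f i) ^ 2 := sq_sum_le_card_mul_sum_sq
    _ = #T * ∑ i, f i := by
        simp only [Real.sq_sqrt (hf _), T, sum_filter_ne_zero]

theorem traceNorm_nonneg {n : Type*} [Fintype n] [DecidableEq n] (A : Matrix n n ℂ) :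
    0 ≤ traceNorm A :=
  sum_nonneg fun _ _ => Real.sqrt_nonneg _

theorem traceNorm_sq_le_rank_mul_trace {n : Type*} [Fintype n] [DecidableEq n]
    (A : Matrix n n ℂ) : traceNorm A ^ 2 ≤ A.rank * (Aᴴ * A).trace.re := by
  have hA := (posSemidef_conjTranspose_mul_self A).isHermitian
  have hrank : A.rank = #{i | hA.eigenvalues i ≠ 0} := by
    rw [← rank_conjTranspose_mul_self, hA.rank_eq_card_non_zero_eigs, Fintype.card_subtype]
  have htrace : (Aᴴ * A).trace.re = ∑ i, hA.eigenvalues i := by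
    simp [hA.trace_eq_sum_eigenvalues]
  rw [hrank, htrace]
  exact sq_sum_sqrt_le_card_mul_sum _ (posSemidef_conjTranspose_mul_self A).eigenvalues_nonneg

theorem Matrix.trace_mul_self_vecMulVec_add_vecMulVec {n R : Type*} [Fintype n] [CommRing R]
    (a b c d : n → R) :
    ((vecMulVec a c + vecMulVec b d) * (vecMulVec a c + vecMulVec b d)).trace =
      (vecMulVec a c + vecMulVec b d).trace ^ 2 - 2 * ((c ⬝ᵥ a) * (d ⬝ᵥ b))
        + 2 * ((c ⬝ᵥ b) * (d ⬝ᵥ a)) := by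
  simp only [add_mul, mul_add, vecMulVec_mul_vecMulVec, trace_add, trace_vecMulVec,
    dotProduct_smul, smul_eq_mul]
  simp only [dotProduct_comm a, dotProduct_comm b]
  ring

theorem re_trace_conjTranspose_mul_self_le {n : Type*} [Fintype n] {a b : n → ℂ}
    {ρ : Matrix n n ℂ} (hρ : ρ = vecMulVec a (star b) + vecMulVec b (star a))
    (htr : ρ.trace = 0) :
    (ρᴴ * ρ).trace.re ≤ 2 * ((star a ⬝ᵥ a).re * (star b ⬝ᵥ b).re) := by
  have hherm : ρᴴ = ρ := by
    simp [hρ, conjTranspose_vecMulVec, add_comm]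
  have htrace : (ρ * ρ).trace =
      2 * ((star a ⬝ᵥ a) * (star b ⬝ᵥ b)) - 2 * ((star b ⬝ᵥ a) * star (star b ⬝ᵥ a)) := by
    rw [hρ] at htr ⊢
    rw [trace_mul_self_vecMulVec_add_vecMulVec, htr, ← star_dotProduct]
    ring
  have hle : (ρ * ρ).trace ≤ 2 * ((star a ⬝ᵥ a) * (star b ⬝ᵥ b)) := by
    rw [htrace]
    exact sub_le_self _ (mul_nonneg zero_le_two (mul_star_self_nonneg _))
  obtain ⟨-, ha⟩ := Complex.le_def.1 (dotProduct_star_self_nonneg a)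
  obtain ⟨-, hb⟩ := Complex.le_def.1 (dotProduct_star_self_nonneg b)
  rw [hherm]
  simpa [Complex.mul_re, ← ha, ← hb] using (Complex.le_def.1 hle).1

/-- If ρ = |a⟩⟨b| + |b⟩⟨a| has trace zero, then ‖ρ‖₁ ≤ 2√(⟨a|a⟩⟨b|b⟩). -/
theorem stmt0 {n : ℕ} (a b : Fin n → ℂ)
    (ρ : Matrix (Fin n) (Fin n) ℂ)
    (hρ : ρ = vecMulVec a (star b) + vecMulVec b (star a))
    (htr : ρ.trace = 0) :
    traceNorm ρ ≤ 2 * Real.sqrt ((star a ⬝ᵥ a).re * (star b ⬝ᵥ b).re) := by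
  have hrank : (ρ.rank : ℝ) ≤ 2 := by
    exact_mod_cast hρ ▸ rank_vecMulVec_add_vecMulVec_le a b (star b) (star a)
  have hab : 0 ≤ (star a ⬝ᵥ a).re * (star b ⬝ᵥ b).re :=
    mul_nonneg (Complex.le_def.1 (dotProduct_star_self_nonneg a)).1
      (Complex.le_def.1 (dotProduct_star_self_nonneg b)).1
  rw [← pow_le_pow_iff_left₀ (traceNorm_nonneg ρ) (by positivity) two_ne_zero, mul_pow,
    Real.sq_sqrt hab]
  calc traceNorm ρ ^ 2 ≤ ρ.rank * (ρᴴ * ρ).trace.re := traceNorm_sq_le_rank_mul_trace ρ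
    _ ≤ ρ.rank * (2 * ((star a ⬝ᵥ a).re * (star b ⬝ᵥ b).re)) := by
        gcongr
        exact re_trace_conjTranspose_mul_self_le hρ htr
    _ ≤ 2 ^ 2 * ((star a ⬝ᵥ a).re * (star b ⬝ᵥ b).re) := by
        rw [sq, mul_assoc]
        gcongr
end

section
/- Delayed entanglement attack: let |ψ₀⟩ = Σ_{i,j∈{0,1}} α_{i,j}|i,j⟩ ⊗ |c_{i,j}⟩ with Σ|α_{i,j}|² = 1 and each |c_{i,j}⟩ normalized, and define ρ = p_R |ψ₀⟩⟨ψ₀| + p_M Σ_{i,j}|α_{i,j}|² |i,j,c_{i,j}⟩⟨i,j,c_{i,j}| and ρ' = p_R |ψ₀'⟩⟨ψ₀'|⊗|0⟩⟨0|_C + p_M Σ_{i,j}|α_{i,j}|² |i,j⟩⟨i,j|⊗|0⟩⟨0|_C, where |ψ₀'⟩ = Σ α_{i,j}|i,j⟩. Then there exists a unitary V on the joint space with V|i,j,0⟩ = |i,j,c_{i,j}⟩ for all i,j, and V ρ' V* = ρ. -/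
/-!
Every unit vector is a column of a unitary matrix (extend it to an orthonormal basis), so
for each basis state `p = (i, j)` there is a unitary `U p` on `H_C` with `U p |0⟩ = |c_p⟩`.
The controlled unitary `V = ∑ p, |p⟩⟨p| ⊗ U p` then sends `|p, 0⟩` to `|p, c_p⟩` and, by
linearity, `|ψ₀'⟩ ⊗ |0⟩` to `|ψ₀⟩`. Conjugation by `V` maps `|x⟩⟨x|` to `|Vx⟩⟨Vx|`, so it
carries each term of `ρ'` to the corresponding term of `ρ`.
-/

open Matrix

namespace Matrix

section UnitVector

variable {𝕜 : Type*} [RCLike 𝕜] {n : Type*} [Fintype n] [DecidableEq n]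

theorem exists_mem_unitaryGroup_mulVec_single_one {x : n → 𝕜} (hx : star x ⬝ᵥ x = 1)
    (i : n) :
    ∃ U ∈ unitaryGroup n 𝕜, U *ᵥ Pi.single i 1 = x := by
  have hnorm : ‖WithLp.toLp 2 x‖ = 1 := by
    have h : ((‖WithLp.toLp 2 x‖ : ℝ) : 𝕜) ^ 2 = 1 := by
      rw [← inner_self_eq_norm_sq_to_K, EuclideanSpace.inner_toLp_toLp, dotProduct_comm, hx]
    norm_cast at h
    exact (pow_eq_one_iff_of_nonneg (norm_nonneg _) two_ne_zero).1 h
  obtain ⟨b, hb⟩ := Orthonormal.exists_orthonormalBasis_extension_of_card_eq (𝕜 := 𝕜)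
    (v := fun _ : n => WithLp.toLp 2 x) (s := {i}) (by simp)
    (orthonormal_subsingleton_iff.2 fun _ => hnorm)
  refine ⟨(EuclideanSpace.basisFun n 𝕜).toBasis.toMatrix b,
    (EuclideanSpace.basisFun n 𝕜).toMatrix_orthonormalBasis_mem_unitary b, ?_⟩
  ext k
  simp [Module.Basis.toMatrix_apply, hb i rfl]

theorem exists_mem_unitaryGroup_mulVec_eq {x y : n → 𝕜} (hx : star x ⬝ᵥ x = 1)
    (hy : star y ⬝ᵥ y = 1) : ∃ U ∈ unitaryGroup n 𝕜, U *ᵥ x = y := by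
  obtain ⟨i⟩ : Nonempty n := by
    by_contra h
    rw [not_nonempty_iff] at h
    simp [dotProduct] at hx
  obtain ⟨A, hA, rfl⟩ := exists_mem_unitaryGroup_mulVec_single_one hx i
  obtain ⟨B, hB, rfl⟩ := exists_mem_unitaryGroup_mulVec_single_one hy i
  refine ⟨B * star A, mul_mem hB (Unitary.star_mem hA), ?_⟩
  rw [← mulVec_mulVec, mulVec_mulVec _ (star A), Unitary.star_mul_self_of_mem hA, one_mulVec]

end UnitVector

section Controlled

variable {ι n α : Type*} [DecidableEq ι]

/-- The controlled matrix `∑ p, |p⟩⟨p| ⊗ U p`, i.e. block diagonal with the control index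
first. -/
def controlled [Zero α] (U : ι → Matrix n n α) : Matrix (ι × n) (ι × n) α :=
  (blockDiagonal U).submatrix (Equiv.prodComm ι n) (Equiv.prodComm ι n)

variable [Fintype ι] [Fintype n]

theorem controlled_mulVec [NonUnitalNonAssocSemiring α] (U : ι → Matrix n n α)
    (f : ι × n → α) (p : ι) (k : n) :
    (controlled U *ᵥ f) (p, k) = (U p *ᵥ fun l => f (p, l)) k := by
  simp only [controlled, submatrix_mulVec_equiv]
  simp [mulVec, dotProduct, blockDiagonal_apply, Fintype.sum_prod_type]

theorem controlled_mem_unitaryGroup [DecidableEq n] [CommRing α] [StarRing α]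
    {U : ι → Matrix n n α} (hU : ∀ p, U p ∈ unitaryGroup n α) :
    controlled U ∈ unitaryGroup (ι × n) α := by
  rw [mem_unitaryGroup_iff, star_eq_conjTranspose, controlled, conjTranspose_submatrix,
    submatrix_mul_equiv, blockDiagonal_conjTranspose, ← blockDiagonal_mul]
  simp_rw [← star_eq_conjTranspose, fun p => mem_unitaryGroup_iff.1 (hU p)]
  rw [← Pi.one_def, blockDiagonal_one, submatrix_one_equiv]

end Controlled

theorem mul_vecMulVec_star_mul_conjTranspose {m α : Type*} [Fintype m] [CommRing α] [StarRing α]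
    (V : Matrix m m α) (x : m → α) :
    V * vecMulVec x (star x) * Vᴴ = vecMulVec (V *ᵥ x) (star (V *ᵥ x)) := by
  rw [mul_vecMulVec, vecMulVec_mul, star_mulVec]

end Matrix

theorem stmt5_general {m : ℕ}
    (c : Fin 2 → Fin 2 → (Fin m → ℂ)) (hc : ∀ i j, star (c i j) ⬝ᵥ c i j = 1)
    (e₀ : Fin m → ℂ) (he₀ : star e₀ ⬝ᵥ e₀ = 1)
    (α : Fin 2 → Fin 2 → ℂ)
    (pR pM : ℝ)
    (ψ₀ : (Fin 2 × Fin 2) × Fin m → ℂ)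
    (hψ₀ : ψ₀ = fun q => α q.1.1 q.1.2 * c q.1.1 q.1.2 q.2)
    (ψ₀' : (Fin 2 × Fin 2) × Fin m → ℂ)
    (hψ₀' : ψ₀' = fun q => α q.1.1 q.1.2 * e₀ q.2)
    -- |i,j,c_{i,j}⟩ :
    (v : Fin 2 → Fin 2 → ((Fin 2 × Fin 2) × Fin m → ℂ))
    (hv : ∀ i j, v i j = fun q => if q.1 = (i, j) then c i j q.2 else 0)
    -- |i,j,0⟩ :
    (w : Fin 2 → Fin 2 → ((Fin 2 × Fin 2) × Fin m → ℂ))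
    (hw : ∀ i j, w i j = fun q => if q.1 = (i, j) then e₀ q.2 else 0)
    (ρ ρ' : Matrix ((Fin 2 × Fin 2) × Fin m) ((Fin 2 × Fin 2) × Fin m) ℂ)
    (hρ : ρ = pR • vecMulVec ψ₀ (star ψ₀)
        + pM • ∑ i, ∑ j, Complex.normSq (α i j) • vecMulVec (v i j) (star (v i j)))
    (hρ' : ρ' = pR • vecMulVec ψ₀' (star ψ₀')
        + pM • ∑ i, ∑ j, Complex.normSq (α i j) • vecMulVec (w i j) (star (w i j))) :
    ∃ V : Matrix ((Fin 2 × Fin 2) × Fin m) ((Fin 2 × Fin 2) × Fin m) ℂ,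
      V ∈ Matrix.unitaryGroup ((Fin 2 × Fin 2) × Fin m) ℂ ∧
      (∀ i j, V *ᵥ w i j = v i j) ∧
      V * ρ' * Vᴴ = ρ := by
  choose U hU hUe₀ using fun p : Fin 2 × Fin 2 =>
    exists_mem_unitaryGroup_mulVec_eq he₀ (hc p.1 p.2)
  have hVw : ∀ i j, controlled U *ᵥ w i j = v i j := by
    intro i j
    ext ⟨p, k⟩
    rw [controlled_mulVec, hw, hv]
    by_cases hp : p = (i, j)
    · subst hp
      simp [hUe₀]
    · simp only [hp, if_false]
      exact congrFun (mulVec_zero (U p)) k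
  have hVψ : controlled U *ᵥ ψ₀' = ψ₀ := by
    ext ⟨p, k⟩
    simp only [controlled_mulVec, hψ₀', hψ₀, ← hUe₀ p]
    exact congrFun (mulVec_smul (U p) (α p.1 p.2) e₀) k
  refine ⟨controlled U, controlled_mem_unitaryGroup hU, hVw, ?_⟩
  simp only [hρ, hρ', Matrix.add_mul, Matrix.mul_add, Matrix.smul_mul, Matrix.mul_smul,
    Matrix.sum_mul, Matrix.mul_sum, mul_vecMulVec_star_mul_conjTranspose, hVψ, hVw]

/-- Delayed entanglement attack: on the joint space (ℂ²⊗ℂ²)⊗H_C there is a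
unitary V with V|i,j,0⟩ = |i,j,c_{i,j}⟩ for all i,j, and V ρ' V* = ρ, where
ρ is the post-interaction state had the entangled state |ψ₀⟩ been sent and
ρ' the corresponding state for the unentangled |ψ₀'⟩ ⊗ |0⟩_C. -/
theorem stmt5 {m : ℕ}
    (c : Fin 2 → Fin 2 → (Fin m → ℂ)) (hc : ∀ i j, star (c i j) ⬝ᵥ c i j = 1)
    (e₀ : Fin m → ℂ) (he₀ : star e₀ ⬝ᵥ e₀ = 1)
    (α : Fin 2 → Fin 2 → ℂ) (hα : ∑ i, ∑ j, Complex.normSq (α i j) = 1)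
    (pR pM : ℝ) (hpR : 0 ≤ pR) (hpM : 0 ≤ pM) (hsum : pR + pM = 1)
    (ψ₀ : (Fin 2 × Fin 2) × Fin m → ℂ)
    (hψ₀ : ψ₀ = fun q => α q.1.1 q.1.2 * c q.1.1 q.1.2 q.2)
    (ψ₀' : (Fin 2 × Fin 2) × Fin m → ℂ)
    (hψ₀' : ψ₀' = fun q => α q.1.1 q.1.2 * e₀ q.2)
    -- |i,j,c_{i,j}⟩ :
    (v : Fin 2 → Fin 2 → ((Fin 2 × Fin 2) × Fin m → ℂ))
    (hv : ∀ i j, v i j = fun q => if q.1 = (i, j) then c i j q.2 else 0)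
    -- |i,j,0⟩ :
    (w : Fin 2 → Fin 2 → ((Fin 2 × Fin 2) × Fin m → ℂ))
    (hw : ∀ i j, w i j = fun q => if q.1 = (i, j) then e₀ q.2 else 0)
    (ρ ρ' : Matrix ((Fin 2 × Fin 2) × Fin m) ((Fin 2 × Fin 2) × Fin m) ℂ)
    (hρ : ρ = pR • vecMulVec ψ₀ (star ψ₀)
        + pM • ∑ i, ∑ j, Complex.normSq (α i j) • vecMulVec (v i j) (star (v i j)))
    (hρ' : ρ' = pR • vecMulVec ψ₀' (star ψ₀')
        + pM • ∑ i, ∑ j, Complex.normSq (α i j) • vecMulVec (w i j) (star (w i j))) :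
    ∃ V : Matrix ((Fin 2 × Fin 2) × Fin m) ((Fin 2 × Fin 2) × Fin m) ℂ,
      V ∈ Matrix.unitaryGroup ((Fin 2 × Fin 2) × Fin m) ℂ ∧
      (∀ i j, V *ᵥ w i j = v i j) ∧
      V * ρ' * Vᴴ = ρ :=
  stmt5_general c hc e₀ he₀ α pR pM ψ₀ hψ₀ ψ₀' hψ₀' v hv w hw ρ ρ' hρ hρ'
end

section
/- Trace-norm bound for the mediating server's states: let ρ⁰ = ((1−Q)/p)·P(|f₀⟩+|f₁⟩) + (Q/p)·P(|f₂⟩+|f₃⟩) and ρ¹ = ((1−Q)/p)·P(|f₀⟩−|f₁⟩) + (Q/p)·P(|f₂⟩−|f₃⟩), where P(z) = zz*, 0 ≤ Q ≤ 1, p = 2p_a > 0, and Re⟨f₀|f₁⟩ = Re⟨f₂|f₃⟩ = 0. Then (1/2)‖ρ⁰ − ρ¹‖₁ ≤ ((1−Q)/p_a)·√(⟨f₀|f₀⟩⟨f₁|f₁⟩) + (Q/p_a)·√(⟨f₂|f₂⟩⟨f₃|f₃⟩). -/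
open Matrix
open scoped ComplexOrder

/-!
The difference ρ⁰ − ρ¹ is a nonnegative combination of matrices
(a + b)(a + b)* − (a − b)(a − b)* = 2(ab* + ba*). With s = ‖a‖, t = ‖b‖ and
u = t a + s b, v = t a − s b, such a matrix equals (uu* − vv*)/(st), a difference of two positive
semidefinite matrices whose traces add up, by the parallelogram law, to 4st. Finally the trace
norm of P − N is at most tr P + tr N for positive semidefinite P, N: in an eigenbasis of P − N
each eigenvalue is a difference of two nonnegative diagonal entries of P and N.
-/

section Algebra

variable {n R : Type*} [Ring R] [StarRing R]

lemma vecMulVec_add_sub_vecMulVec_sub (x y : n → R) :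
    vecMulVec (x + y) (star (x + y)) - vecMulVec (x - y) (star (x - y))
      = 2 • (vecMulVec x (star y) + vecMulVec y (star x)) := by
  ext i j
  simp only [Matrix.sub_apply, Matrix.add_apply, Matrix.smul_apply, vecMulVec_apply,
    Pi.add_apply, Pi.sub_apply, Pi.star_apply, star_add, star_sub]
  noncomm_ring

lemma parallelogram_law_star_dotProduct [Fintype n] (x y : n → R) :
    star (x + y) ⬝ᵥ (x + y) + star (x - y) ⬝ᵥ (x - y) = 2 * (star x ⬝ᵥ x + star y ⬝ᵥ y) := by
  simp only [star_add, star_sub, add_dotProduct, sub_dotProduct, dotProduct_add, dotProduct_sub]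
  noncomm_ring

end Algebra

variable {n : Type*} [Fintype n]

lemma eq_zero_of_re_dotProduct_star_self_eq_zero {v : n → ℂ} (h : (star v ⬝ᵥ v).re = 0) :
    v = 0 :=
  dotProduct_star_self_eq_zero.1
    (Complex.ext h (Complex.nonneg_iff.1 (dotProduct_star_self_nonneg v)).2.symm)

lemma exists_posSemidef_sub_eq_vecMulVec_add_sub_vecMulVec_sub (a b : n → ℂ) :
    ∃ P N : Matrix n n ℂ, P.PosSemidef ∧ N.PosSemidef ∧
      vecMulVec (a + b) (star (a + b)) - vecMulVec (a - b) (star (a - b)) = P - N ∧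
      (trace P).re + (trace N).re = 4 * √((star a ⬝ᵥ a).re * (star b ⬝ᵥ b).re) := by
  set s := √(star a ⬝ᵥ a).re
  set t := √(star b ⬝ᵥ b).re
  have hs : s ^ 2 = (star a ⬝ᵥ a).re :=
    Real.sq_sqrt (Complex.nonneg_iff.1 (dotProduct_star_self_nonneg a)).1
  have ht : t ^ 2 = (star b ⬝ᵥ b).re :=
    Real.sq_sqrt (Complex.nonneg_iff.1 (dotProduct_star_self_nonneg b)).1
  rw [Real.sqrt_mul' _ (ht ▸ sq_nonneg t)]
  rcases eq_or_ne (s * t) 0 with hst | hst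
  · obtain rfl | rfl : a = 0 ∨ b = 0 := by
      rcases mul_eq_zero.1 hst with h | h
      · exact .inl (eq_zero_of_re_dotProduct_star_self_eq_zero (by rw [← hs, h, sq, zero_mul]))
      · exact .inr (eq_zero_of_re_dotProduct_star_self_eq_zero (by rw [← ht, h, sq, zero_mul]))
    all_goals exact ⟨0, 0, .zero, .zero, by simp, by simp⟩
  have hst_inv : 0 ≤ (s * t)⁻¹ := by positivity
  set u := t • a + s • b
  set v := t • a - s • b
  refine ⟨(s * t)⁻¹ • vecMulVec u (star u), (s * t)⁻¹ • vecMulVec v (star v),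
    (posSemidef_vecMulVec_self_star u).smul hst_inv,
    (posSemidef_vecMulVec_self_star v).smul hst_inv, ?_, ?_⟩
  · rw [← smul_sub, vecMulVec_add_sub_vecMulVec_sub, vecMulVec_add_sub_vecMulVec_sub]
    simp only [star_smul, star_trivial, smul_vecMulVec, vecMulVec_smul, smul_smul]
    rw [mul_comm t s, ← smul_add, smul_comm, smul_smul, inv_mul_cancel₀ hst, one_smul]
  · rw [trace_smul, trace_smul, trace_vecMulVec, trace_vecMulVec, dotProduct_comm u,
      dotProduct_comm v, Complex.smul_re, Complex.smul_re, ← smul_add, ← Complex.add_re,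
      parallelogram_law_star_dotProduct]
    simp only [star_smul, star_trivial, smul_dotProduct, dotProduct_smul, smul_smul]
    change (s * t)⁻¹ • (2 * _ : ℂ).re = 4 * (s * t)
    simp only [Complex.mul_re, Complex.re_ofNat, Complex.im_ofNat, Complex.add_re,
      Complex.add_im, Complex.smul_re, Complex.smul_im, ← hs, ← ht, smul_eq_mul, zero_mul,
      sub_zero]
    field_simp
    ring

variable [DecidableEq n]

lemma Matrix.IsHermitian.trace_cfc {A : Matrix n n ℂ} (hA : A.IsHermitian) (f : ℝ → ℝ) :
    trace (cfc f A) = ∑ i, (f (hA.eigenvalues i) : ℂ) := by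
  rw [hA.cfc_eq, IsHermitian.cfc, Unitary.conjStarAlgAut_apply, trace_mul_cycle,
    Unitary.coe_star_mul_self, one_mul, trace_diagonal]
  rfl

open scoped MatrixOrder Matrix.Norms.L2Operator in
lemma traceNorm_eq_re_trace_abs (A : Matrix n n ℂ) : traceNorm A = (trace (CFC.abs A)).re := by
  have hB := posSemidef_conjTranspose_mul_self A
  rw [CFC.abs, CFC.sqrt_eq_cfc, star_eq_conjTranspose, cfc_nnreal_eq_real _ _ hB.nonneg,
    hB.isHermitian.trace_cfc, Complex.re_sum, traceNorm]
  refine Finset.sum_congr rfl fun i _ => ?_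
  simp [Real.coe_toNNReal', max_eq_left (hB.eigenvalues_nonneg i)]

open scoped MatrixOrder Matrix.Norms.L2Operator in
lemma Matrix.IsHermitian.traceNorm_eq_sum_abs_eigenvalues {H : Matrix n n ℂ}
    (hH : H.IsHermitian) : traceNorm H = ∑ i, |hH.eigenvalues i| := by
  rw [traceNorm_eq_re_trace_abs, CFC.abs_eq_cfc_norm H hH.isSelfAdjoint, hH.trace_cfc,
    Complex.re_sum]
  simp

lemma traceNorm_le_of_eq_sub {H P N : Matrix n n ℂ} (hP : P.PosSemidef) (hN : N.PosSemidef)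
    (h : H = P - N) : traceNorm H ≤ (trace P).re + (trace N).re := by
  subst h
  have hH : (P - N).IsHermitian := hP.isHermitian.sub hN.isHermitian
  set U : Matrix n n ℂ := (hH.eigenvectorUnitary : Matrix n n ℂ)
  have htrace (A : Matrix n n ℂ) : trace (star U * A * U) = trace A := by
    rw [trace_mul_cycle, Unitary.mul_star_self_of_mem hH.eigenvectorUnitary.2, one_mul]
  have hdiag : star U * (P - N) * U = diagonal (RCLike.ofReal ∘ hH.eigenvalues) := by
    simpa [Unitary.conjStarAlgAut_star_apply] using hH.conjStarAlgAut_star_eigenvectorUnitary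
  have heig (i : n) :
      hH.eigenvalues i = ((star U * P * U) i i).re - ((star U * N * U) i i).re := by
    simpa [mul_sub, sub_mul] using congrArg Complex.re (congrFun₂ hdiag i i).symm
  have hdiag_nonneg {A : Matrix n n ℂ} (hA : A.PosSemidef) (i : n) :
      0 ≤ ((star U * A * U) i i).re :=
    (Complex.nonneg_iff.1 (hA.conjTranspose_mul_mul_same U).diag_nonneg).1
  rw [hH.traceNorm_eq_sum_abs_eigenvalues, ← htrace P, ← htrace N, trace, trace, Complex.re_sum,
    Complex.re_sum, ← Finset.sum_add_distrib]
  gcongr with i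
  rw [heig, diag_apply, diag_apply, abs_le]
  constructor <;> linarith [hdiag_nonneg hP i, hdiag_nonneg hN i]

lemma traceNorm_smul_sub_add_smul_sub_le {P₁ N₁ P₂ N₂ : Matrix n n ℂ} (hP₁ : P₁.PosSemidef)
    (hN₁ : N₁.PosSemidef) (hP₂ : P₂.PosSemidef) (hN₂ : N₂.PosSemidef) {r₁ r₂ : ℝ}
    (hr₁ : 0 ≤ r₁) (hr₂ : 0 ≤ r₂) :
    traceNorm (r₁ • (P₁ - N₁) + r₂ • (P₂ - N₂))
      ≤ r₁ * ((trace P₁).re + (trace N₁).re) + r₂ * ((trace P₂).re + (trace N₂).re) := by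
  refine (traceNorm_le_of_eq_sub ((hP₁.smul hr₁).add (hP₂.smul hr₂))
    ((hN₁.smul hr₁).add (hN₂.smul hr₂)) (by module)).trans_eq ?_
  simp only [trace_add, trace_smul, Complex.add_re, Complex.smul_re, smul_eq_mul]
  ring

theorem stmt8_general {m : ℕ} (f₀ f₁ f₂ f₃ : Fin m → ℂ) (Q : ℝ)
    (hQ0 : 0 ≤ Q) (hQ1 : Q ≤ 1)
    (pa : ℝ)
    (hpa_pos : 0 < pa)
    (p : ℝ) (hp : p = 2 * pa)
    (ρ0 ρ1 : Matrix (Fin m) (Fin m) ℂ)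
    (hρ0 : ρ0 = ((1 - Q) / p) • vecMulVec (f₀ + f₁) (star (f₀ + f₁))
        + (Q / p) • vecMulVec (f₂ + f₃) (star (f₂ + f₃)))
    (hρ1 : ρ1 = ((1 - Q) / p) • vecMulVec (f₀ - f₁) (star (f₀ - f₁))
        + (Q / p) • vecMulVec (f₂ - f₃) (star (f₂ - f₃))) :
    (1 / 2) * traceNorm (ρ0 - ρ1)
      ≤ ((1 - Q) / pa) * Real.sqrt ((star f₀ ⬝ᵥ f₀).re * (star f₁ ⬝ᵥ f₁).re)
      + (Q / pa) * Real.sqrt ((star f₂ ⬝ᵥ f₂).re * (star f₃ ⬝ᵥ f₃).re) := by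
  obtain ⟨P₁, N₁, hP₁, hN₁, hE₁, hT₁⟩ :=
    exists_posSemidef_sub_eq_vecMulVec_add_sub_vecMulVec_sub f₀ f₁
  obtain ⟨P₂, N₂, hP₂, hN₂, hE₂, hT₂⟩ :=
    exists_posSemidef_sub_eq_vecMulVec_add_sub_vecMulVec_sub f₂ f₃
  have hρ : ρ0 - ρ1 = ((1 - Q) / p) • (P₁ - N₁) + (Q / p) • (P₂ - N₂) := by
    rw [hρ0, hρ1, ← hE₁, ← hE₂]
    module
  have hp0 : 0 < p := by linarith
  have hbound := traceNorm_smul_sub_add_smul_sub_le hP₁ hN₁ hP₂ hN₂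
    (div_nonneg (sub_nonneg.2 hQ1) hp0.le) (div_nonneg hQ0 hp0.le)
  rw [← hρ, hT₁, hT₂, hp] at hbound
  calc (1 / 2) * traceNorm (ρ0 - ρ1)
      ≤ (1 / 2) * ((1 - Q) / (2 * pa) * (4 * √((star f₀ ⬝ᵥ f₀).re * (star f₁ ⬝ᵥ f₁).re))
        + Q / (2 * pa) * (4 * √((star f₂ ⬝ᵥ f₂).re * (star f₃ ⬝ᵥ f₃).re))) := by gcongr
    _ = _ := by field_simp; ring

/-- Trace-norm bound for the mediating server's states:
(1/2)‖ρ⁰ − ρ¹‖₁ ≤ ((1−Q)/p_a)√(⟨f₀|f₀⟩⟨f₁|f₁⟩) + (Q/p_a)√(⟨f₂|f₂⟩⟨f₃|f₃⟩). -/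
theorem stmt8 {m : ℕ} (f₀ f₁ f₂ f₃ : Fin m → ℂ) (Q : ℝ)
    (hQ0 : 0 ≤ Q) (hQ1 : Q ≤ 1)
    (pa : ℝ)
    (hpa : pa = (1 / 2) * (1 - Q) * ((star f₀ ⬝ᵥ f₀).re + (star f₁ ⬝ᵥ f₁).re)
        + (1 / 2) * Q * ((star f₂ ⬝ᵥ f₂).re + (star f₃ ⬝ᵥ f₃).re))
    (hpa_pos : 0 < pa)
    (p : ℝ) (hp : p = 2 * pa)
    (hRe01 : (star f₀ ⬝ᵥ f₁).re = 0) (hRe23 : (star f₂ ⬝ᵥ f₃).re = 0)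
    (ρ0 ρ1 : Matrix (Fin m) (Fin m) ℂ)
    (hρ0 : ρ0 = ((1 - Q) / p) • vecMulVec (f₀ + f₁) (star (f₀ + f₁))
        + (Q / p) • vecMulVec (f₂ + f₃) (star (f₂ + f₃)))
    (hρ1 : ρ1 = ((1 - Q) / p) • vecMulVec (f₀ - f₁) (star (f₀ - f₁))
        + (Q / p) • vecMulVec (f₂ - f₃) (star (f₂ - f₃))) :
    (1 / 2) * traceNorm (ρ0 - ρ1)
      ≤ ((1 - Q) / pa) * Real.sqrt ((star f₀ ⬝ᵥ f₀).re * (star f₁ ⬝ᵥ f₁).re)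
      + (Q / pa) * Real.sqrt ((star f₂ ⬝ᵥ f₂).re * (star f₃ ⬝ᵥ f₃).re) :=
  stmt8_general f₀ f₁ f₂ f₃ Q hQ0 hQ1 pa hpa_pos p hp ρ0 ρ1 hρ0 hρ1
end

section
/- Optimization bound: let 0 < Q < 1, p_w ≥ 0, and suppose real numbers x, y, z ≥ 0 and θ ∈ ℝ satisfy p_w = (1−Q)x² + Q(y²+z²) + 2√(Q(1−Q))·x·y·cos θ with y² + z² ≤ F₂ for some F₂ ≥ 0. Then x ≤ (√(1−Q)(√(Q·F₂) + √p_w))/(1−Q). -/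
/-- Optimization bound: if p_w = (1−Q)x² + Q(y²+z²) + 2√(Q(1−Q))xy·cosθ with
x,y,z ≥ 0 and y²+z² ≤ F₂, then x ≤ √(1−Q)(√(Q·F₂) + √p_w)/(1−Q). -/
theorem stmt13 (Q pw x y z θ F₂ : ℝ)
    (hQ0 : 0 < Q) (hQ1 : Q < 1) (hpw : 0 ≤ pw)
    (hx : 0 ≤ x) (hy : 0 ≤ y) (hz : 0 ≤ z)
    (hF₂ : 0 ≤ F₂) (hyz : y ^ 2 + z ^ 2 ≤ F₂)
    (heq : pw = (1 - Q) * x ^ 2 + Q * (y ^ 2 + z ^ 2)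
        + 2 * Real.sqrt (Q * (1 - Q)) * x * y * Real.cos θ) :
    x ≤ Real.sqrt (1 - Q) * (Real.sqrt (Q * F₂) + Real.sqrt pw) / (1 - Q) := by
  have h1 : (0:ℝ) < 1 - Q := by linarith
  set a := Real.sqrt (1 - Q) with ha_def
  set b := Real.sqrt Q with hb_def
  have ha : a ^ 2 = 1 - Q := Real.sq_sqrt h1.le
  have hb : b ^ 2 = Q := Real.sq_sqrt hQ0.le
  have ha0 : 0 < a := Real.sqrt_pos.2 h1
  have hb0 : 0 ≤ b := Real.sqrt_nonneg _
  have hab : Real.sqrt (Q * (1 - Q)) = b * a := Real.sqrt_mul hQ0.le _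
  have hcos : -1 ≤ Real.cos θ := Real.neg_one_le_cos θ
  have key : (a * x - b * y) ^ 2 ≤ pw := by
    rw [heq, hab]
    nlinarith [sq_nonneg z, mul_nonneg hx hy, mul_nonneg (mul_nonneg hb0 ha0.le)
      (mul_nonneg hx hy), mul_le_mul_of_nonneg_left hcos
      (mul_nonneg (mul_nonneg (mul_nonneg hb0 ha0.le) hx) hy)]
  have h2 : a * x - b * y ≤ Real.sqrt pw := by
    have h := Real.sqrt_le_sqrt key
    rw [Real.sqrt_sq_eq_abs] at h
    linarith [le_abs_self (a * x - b * y)]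
  have h3 : b * y ≤ Real.sqrt (Q * F₂) := by
    have : (b * y) ^ 2 ≤ Q * F₂ := by nlinarith
    have h4 := Real.sqrt_le_sqrt this
    rwa [Real.sqrt_sq (mul_nonneg hb0 hy)] at h4
  have h4 : a * x ≤ Real.sqrt (Q * F₂) + Real.sqrt pw := by linarith
  rw [le_div_iff₀ h1]
  nlinarith [mul_le_mul_of_nonneg_left h4 ha0.le]
end

section
/- Weaker optimization bound: under the hypotheses p_w = (1−Q)x² + Q(y²+z²) + 2√(Q(1−Q))xy·cos θ with x,y,z ≥ 0, y²+z² ≤ 1, and 0 < Q < 1, it holds that x ≤ (√(1−Q)(√Q + √p_w))/(1−Q). -/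
/-- Weaker optimization bound: if p_w = (1−Q)x² + Q(y²+z²) + 2√(Q(1−Q))xy·cosθ
with x,y,z ≥ 0 and y²+z² ≤ 1, then x ≤ √(1−Q)(√Q + √p_w)/(1−Q). -/
theorem stmt14 (Q pw x y z θ : ℝ)
    (hQ0 : 0 < Q) (hQ1 : Q < 1) (hpw : 0 ≤ pw)
    (hx : 0 ≤ x) (hy : 0 ≤ y) (hz : 0 ≤ z)
    (hyz : y ^ 2 + z ^ 2 ≤ 1)
    (heq : pw = (1 - Q) * x ^ 2 + Q * (y ^ 2 + z ^ 2)
        + 2 * Real.sqrt (Q * (1 - Q)) * x * y * Real.cos θ) :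
    x ≤ Real.sqrt (1 - Q) * (Real.sqrt Q + Real.sqrt pw) / (1 - Q) := by
  set a := Real.sqrt (1 - Q) with ha
  set b := Real.sqrt Q with hb
  have h1Q : (0:ℝ) < 1 - Q := by linarith
  have ha0 : 0 < a := Real.sqrt_pos.mpr h1Q
  have hb0 : 0 < b := Real.sqrt_pos.mpr hQ0
  have ha2 : a ^ 2 = 1 - Q := Real.sq_sqrt h1Q.le
  have hb2 : b ^ 2 = Q := Real.sq_sqrt hQ0.le
  have hab : Real.sqrt (Q * (1 - Q)) = b * a := Real.sqrt_mul hQ0.le _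
  have hy1 : y ≤ 1 := by nlinarith
  have hz2 : 0 ≤ z ^ 2 := sq_nonneg z
  have hcos : Real.cos θ ≥ -1 := Real.neg_one_le_cos θ
  -- key: a*x - b ≤ √pw
  have key : a * x - b ≤ Real.sqrt pw := by
    rcases le_or_gt (a * x) b with h | h
    · have : (0:ℝ) ≤ Real.sqrt pw := Real.sqrt_nonneg _
      linarith
    · have hlow : (a * x - b) ^ 2 ≤ pw := by
        have h2 : a * x - b * y > 0 := by nlinarith
        have hpge : (a * x - b * y) ^ 2 ≤ pw := by
          rw [heq, hab]
          have hxy : 0 ≤ x * y := mul_nonneg hx hy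
          nlinarith [mul_le_mul_of_nonneg_left hcos.le (by positivity : (0:ℝ) ≤ 2 * (b * a) * x * y)]
        have : (a * x - b) ≤ (a * x - b * y) := by nlinarith
        nlinarith
      have := Real.sqrt_le_sqrt hlow
      rwa [Real.sqrt_sq (by linarith)] at this
  rw [le_div_iff₀ h1Q]
  nlinarith [key, Real.sqrt_nonneg pw]
end

section
/- Positivity of the worst-case key rate for small noise: define r(Q) = 1 − h(Q) − 2(√(1−Q)(√Q + √Q) + Q) where h is the binary entropy h(x) = −x log₂ x − (1−x) log₂(1−x) (with h(0)=0). Then r(Q) > 0 for all Q ∈ [0, 0.0335], and r(Q) < 0 for Q = 0.04. -/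
/-- Binary entropy (base 2), with h(0) = h(1) = 0 (since `Real.logb 2 0 = 0`). -/
noncomputable def binEnt (x : ℝ) : ℝ :=
  -x * Real.logb 2 x - (1 - x) * Real.logb 2 (1 - x)

lemma binEnt_eq (x : ℝ) : binEnt x = Real.binEntropy x / Real.log 2 := by
  unfold binEnt Real.binEntropy
  rw [Real.logb, Real.logb, Real.log_inv, Real.log_inv]
  ring

lemma log_lb : (-3.3986 : ℝ) ≤ Real.log 0.0335 := by
  have h32 : (0.0335 : ℝ) = 1.072 / 32 := by norm_num
  rw [h32, Real.log_div (by norm_num) (by norm_num)]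
  have h1 : (1 : ℝ) - (1.072)⁻¹ ≤ Real.log 1.072 :=
    Real.one_sub_inv_le_log_of_pos (by norm_num)
  have h2 : Real.log 32 = 5 * Real.log 2 := by
    rw [show (32 : ℝ) = 2 ^ 5 by norm_num, Real.log_pow]; push_cast; ring
  have h3 := Real.log_two_lt_d9
  rw [h2]
  nlinarith [h1, h3]

lemma binEntropy_ub : Real.binEntropy 0.0335 ≤ 0.14736 := by
  unfold Real.binEntropy
  rw [Real.log_inv, Real.log_inv]
  have h1 := log_lb
  have h2 : (1 : ℝ) - (0.9665)⁻¹ ≤ Real.log 0.9665 :=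
    Real.one_sub_inv_le_log_of_pos (by norm_num)
  norm_num at h1 h2 ⊢
  nlinarith

lemma binEnt_ub {Q : ℝ} (h0 : 0 ≤ Q) (h1 : Q ≤ 0.0335) : binEnt Q ≤ 0.21262 := by
  rw [binEnt_eq]
  have hmono : Real.binEntropy Q ≤ Real.binEntropy 0.0335 := by
    rcases eq_or_lt_of_le h1 with h | h
    · rw [h]
    · exact le_of_lt (Real.binEntropy_strictMonoOn
        (Set.mem_Icc.mpr ⟨h0, by norm_num; linarith⟩)
        (Set.mem_Icc.mpr ⟨by norm_num, by norm_num⟩) h)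
  have hb := binEntropy_ub
  have hl := Real.log_two_gt_d9
  have hpos : (0:ℝ) < Real.log 2 := by linarith
  rw [div_le_iff₀ hpos]
  nlinarith

lemma binEnt_lb04 : (0.1599 : ℝ) ≤ binEnt 0.04 := by
  rw [binEnt_eq]
  have h1 : Real.log 0.04 ≤ Real.log 0.0625 :=
    Real.log_le_log (by norm_num) (by norm_num)
  have h2 : Real.log 0.0625 = -(4 * Real.log 2) := by
    rw [show (0.0625 : ℝ) = (2 ^ 4)⁻¹ by norm_num, Real.log_inv, Real.log_pow]
    push_cast; ring
  have h3 : Real.log 0.96 ≤ 0 := Real.log_nonpos (by norm_num) (by norm_num)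
  have hl := Real.log_two_gt_d9
  have hu := Real.log_two_lt_d9
  have hpos : (0:ℝ) < Real.log 2 := by linarith
  unfold Real.binEntropy
  rw [Real.log_inv, Real.log_inv, le_div_iff₀ hpos]
  nlinarith

/-- Worst-case key rate r(Q) = 1 − h(Q) − 2(√(1−Q)(√Q + √Q) + Q)
is positive for all Q ∈ [0, 0.0335] and negative at Q = 0.04. -/
theorem stmt16 (r : ℝ → ℝ)
    (hr : r = fun Q => 1 - binEnt Q
        - 2 * (Real.sqrt (1 - Q) * (Real.sqrt Q + Real.sqrt Q) + Q)) :
    (∀ Q ∈ Set.Icc (0 : ℝ) 0.0335, 0 < r Q) ∧ r 0.04 < 0 := by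
  subst hr
  constructor
  · rintro Q ⟨h0, h1⟩
    simp only
    have hs : Real.sqrt (1 - Q) * Real.sqrt Q ≤ 0.17994 := by
      rw [← Real.sqrt_mul (by linarith) Q]
      have hle : (1 - Q) * Q ≤ (0.17994 : ℝ) ^ 2 := by nlinarith
      calc Real.sqrt ((1 - Q) * Q) ≤ Real.sqrt ((0.17994 : ℝ) ^ 2) :=
            Real.sqrt_le_sqrt hle
        _ = 0.17994 := Real.sqrt_sq (by norm_num)
    have hb := binEnt_ub h0 h1
    nlinarith
  · simp only
    have h04 : Real.sqrt 0.04 = 0.2 := by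
      rw [show (0.04 : ℝ) = 0.2 ^ 2 by norm_num, Real.sqrt_sq (by norm_num)]
    have h96 : (0.9797 : ℝ) ≤ Real.sqrt (1 - 0.04) := by
      rw [show (1 : ℝ) - 0.04 = 0.96 by norm_num]
      have : Real.sqrt (0.9797 ^ 2) ≤ Real.sqrt 0.96 := Real.sqrt_le_sqrt (by norm_num)
      rwa [Real.sqrt_sq (by norm_num)] at this
    have hb := binEnt_lb04
    nlinarith
end

section
/- Positivity of the improved key rate: define r(Q) = 1 − h(Q²·2) − 2(√(1−Q)(Q + √Q) + Q²), where h is the binary entropy. Then r(Q) > 0 for all Q ∈ [0, 0.1065] and r(0.11) < 0. -/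
lemma log2_pos : (0:ℝ) < Real.log 2 := Real.log_pos (by norm_num)

lemma binEnt_mono {s t : ℝ} (hs : 0 ≤ s) (hst : s ≤ t) (ht : t ≤ 1/2) :
    binEnt s ≤ binEnt t := by
  rw [binEnt_eq, binEnt_eq, div_le_div_iff_of_pos_right log2_pos]
  exact Real.binEntropy_strictMonoOn.monotoneOn
    ⟨hs, by linarith⟩ ⟨by linarith, by linarith⟩ hst

lemma sqle {x c : ℝ} (hx : 0 ≤ x) (hc : 0 ≤ c) (h : x^2 ≤ c^2) : x ≤ c := by
  nlinarith

/-- lower bound on log: `1 - 1/x ≤ log x` for `x > 0`. -/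
lemma log_ge (x : ℝ) (hx : 0 < x) : 1 - 1/x ≤ Real.log x := by
  have h := Real.log_le_sub_one_of_pos (x := x⁻¹) (by positivity)
  rw [Real.log_inv] at h
  have : x⁻¹ = 1/x := by ring
  linarith [h, this ▸ h]

lemma binEnt_x0_le : binEnt 0.0226845 ≤ 0.158507 := by
  have hlog2 := Real.log_two_gt_d9
  have hx0 : (0.0226845:ℝ) = 0.725904 / 32 := by norm_num
  have h1 : Real.log (0.0226845:ℝ) = Real.log 0.725904 - 5 * Real.log 2 := by
    rw [hx0, Real.log_div (by norm_num) (by norm_num)]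
    have : (32:ℝ) = 2^5 := by norm_num
    rw [this, Real.log_pow]
    push_cast; ring
  have h2 : (1:ℝ) - 1/0.725904 ≤ Real.log 0.725904 := log_ge _ (by norm_num)
  have h3 : (1:ℝ) - 1/(1 - 0.0226845) ≤ Real.log (1 - 0.0226845) := log_ge _ (by norm_num)
  rw [binEnt_eq, div_le_iff₀ log2_pos]
  unfold Real.binEntropy
  rw [Real.log_inv, Real.log_inv, h1]
  nlinarith [hlog2]

lemma binEnt_x1_ge : (0.1629:ℝ) ≤ binEnt 0.0242 := by
  have hlog2 := Real.log_two_gt_d9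
  have hlog2' := Real.log_two_lt_d9
  have hx1 : (0.0242:ℝ) = 0.7744 / 32 := by norm_num
  have h1 : Real.log (0.0242:ℝ) = Real.log 0.7744 - 5 * Real.log 2 := by
    rw [hx1, Real.log_div (by norm_num) (by norm_num)]
    have : (32:ℝ) = 2^5 := by norm_num
    rw [this, Real.log_pow]
    push_cast; ring
  have h2 : Real.log (0.7744:ℝ) ≤ 0.7744 - 1 := Real.log_le_sub_one_of_pos (by norm_num)
  have h3 : Real.log ((1:ℝ) - 0.0242) ≤ (1 - 0.0242) - 1 :=
    Real.log_le_sub_one_of_pos (by norm_num)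
  rw [binEnt_eq, le_div_iff₀ log2_pos]
  unfold Real.binEntropy
  rw [Real.log_inv, Real.log_inv, h1]
  nlinarith [hlog2, hlog2']

/-- Improved key rate r(Q) = 1 − h(2Q²) − 2(√(1−Q)(Q + √Q) + Q²)
is positive for all Q ∈ [0, 0.1065] and negative at Q = 0.11. -/
theorem stmt17 (r : ℝ → ℝ)
    (hr : r = fun Q => 1 - binEnt (Q ^ 2 * 2)
        - 2 * (Real.sqrt (1 - Q) * (Q + Real.sqrt Q) + Q ^ 2)) :
    (∀ Q ∈ Set.Icc (0 : ℝ) 0.1065, 0 < r Q) ∧ r 0.11 < 0 := by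
  subst hr
  constructor
  · rintro Q ⟨hQ0, hQa⟩
    simp only
    set s := Real.sqrt (1 - Q) with hs
    set t := Real.sqrt Q with ht
    have hs0 : 0 ≤ s := Real.sqrt_nonneg _
    have ht0 : 0 ≤ t := Real.sqrt_nonneg _
    have hs2 : s^2 = 1 - Q := Real.sq_sqrt (by norm_num at hQa ⊢; linarith)
    have ht2 : t^2 = Q := Real.sq_sqrt hQ0
    have h1 : Q * s ≤ 0.1006693 := by
      apply sqle (by positivity) (by norm_num)
      have hexp2 : (Q*s)^2 = Q^2*(1-Q) := by rw [mul_pow, hs2]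
      rw [hexp2]
      nlinarith [mul_nonneg (mul_nonneg (sub_nonneg.2 hQa) hQ0) hQ0,
        mul_nonneg (sub_nonneg.2 hQa) hQ0, sq_nonneg (Q - 0.1065)]
    have h2 : s * t ≤ 0.3084767 := by
      apply sqle (by positivity) (by norm_num)
      nlinarith
    have h3 : binEnt (Q^2*2) ≤ binEnt 0.0226845 := by
      apply binEnt_mono (by positivity) (by nlinarith) (by norm_num)
    have h4 := binEnt_x0_le
    have hexp : s * (Q + t) = Q * s + s * t := by ring
    have hQ2 : Q^2 ≤ 0.01134225 := by nlinarith
    rw [hexp]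
    linarith
  · simp only
    have l1 : (0.943398:ℝ) ≤ Real.sqrt (1 - 0.11) := by
      rw [Real.le_sqrt (by norm_num) (by norm_num)]; norm_num
    have l2 : (0.331662:ℝ) ≤ Real.sqrt 0.11 := by
      rw [Real.le_sqrt (by norm_num) (by norm_num)]; norm_num
    have hB : (0.1629:ℝ) ≤ binEnt ((0.11:ℝ)^2 * 2) := by
      have : (0.11:ℝ)^2 * 2 = 0.0242 := by norm_num
      rw [this]; exact binEnt_x1_ge
    have hprod : (0.943398:ℝ) * (0.11 + 0.331662) ≤
        Real.sqrt (1 - 0.11) * (0.11 + Real.sqrt 0.11) := by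
      apply mul_le_mul l1 (by linarith) (by norm_num) (Real.sqrt_nonneg _)
    nlinarith [hprod, hB]
end
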